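/- arXiv:2105.09105 — 2 statements merged into one kernel-verified Lean document; each statement's English description precedes it below -/
import Mathlib

section
/- Let A be an aperiodic DFA. Then A has a sink state if and only if A has a synchronizing word. -/
/-- The state reached from `q` after reading the word `w` letter by letter. -/
def runWord {Q σ : Type*} (δ : Q → σ → Q) (q : Q) (w : List σ) : Q :=
  w.foldl δ q

/-- The `k`-fold concatenation of the word `w`. -/
def wordPow {σ : Type*} (w : List σ) (k : ℕ) : List σ :=
  (List.replicate k w).flatten

/-- `w` is a synchronizing word: it brings every state to one common state. -/
def IsSyncWord {Q σ : Type*} (δ : Q → σ → Q) (w : List σ) : Prop :=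
  ∃ t : Q, ∀ q : Q, runWord δ q w = t

/-- `t` is a sink state: reachable from every state. -/
def IsSink {Q σ : Type*} (δ : Q → σ → Q) (t : Q) : Prop :=
  ∀ q : Q, ∃ w : List σ, runWord δ q w = t

/-- The DFA is aperiodic: for every word `w` there is `k ≥ 1` with
`q·w^k = q·w^(k+1)` for all states `q`. -/
def IsAperiodic {Q σ : Type*} (δ : Q → σ → Q) : Prop :=
  ∀ w : List σ, ∃ k : ℕ, 1 ≤ k ∧
    ∀ q : Q, runWord δ q (wordPow w k) = runWord δ q (wordPow w (k + 1))

/-- The DFA is strongly connected. -/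
def StronglyConn {Q σ : Type*} (δ : Q → σ → Q) : Prop :=
  ∀ p q : Q, ∃ w : List σ, runWord δ p w = q

/-- `M` is an almost minimal SCC of the square automaton. -/
def AlmostMinSCC {Q σ : Type*} (δ : Q → σ → Q) (M : Set (Q × Q)) : Prop :=
  M.Nonempty ∧
  (∀ p q : Q, (p, q) ∈ M → p ≠ q) ∧
  (∀ p q p' q' : Q, (p, q) ∈ M → (p', q') ∈ M →
    ∃ w : List σ, runWord δ p w = p' ∧ runWord δ q w = q') ∧
  (∀ p q : Q, (p, q) ∈ M → ∀ a : σ, δ p a ≠ δ q a →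
    ∃ s : List σ, runWord δ (δ p a) s = p ∧ runWord δ (δ q a) s = q)

/-- `≻_M`: the transitive closure of `M` viewed as a relation on states. -/
def succM {Q : Type*} (M : Set (Q × Q)) : Q → Q → Prop :=
  Relation.TransGen (fun p q => (p, q) ∈ M)

/-- `≽_M`: the reflexive closure of `≻_M`. -/
def succeqM {Q : Type*} (M : Set (Q × Q)) : Q → Q → Prop :=
  Relation.ReflGen (succM M)

/-- `ρ_M`: the equivalence closure of `≻_M`. -/
def rhoM {Q : Type*} (M : Set (Q × Q)) : Q → Q → Prop :=
  Relation.EqvGen (succM M)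

/-- `Γ(M)`: the set of states occurring as a component of some pair in `M`. -/
def GammaM {Q : Type*} (M : Set (Q × Q)) : Set Q :=
  {x | ∃ y : Q, (x, y) ∈ M ∨ (y, x) ∈ M}

/-- The image `R·s` of a set of states `R` under the word `s`. -/
def imageSet {Q σ : Type*} (δ : Q → σ → Q) (R : Set Q) (s : List σ) : Set Q :=
  (fun p => runWord δ p s) '' R

/-- The set of `≻_M`-minimal states of a set `P`. -/
def minSet {Q : Type*} (M : Set (Q × Q)) (P : Set Q) : Set Q :=
  {p ∈ P | ∀ q ∈ P, ¬ succM M p q}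

lemma runWord_append {Q σ : Type*} (δ : Q → σ → Q) (q : Q) (a b : List σ) :
    runWord δ q (a ++ b) = runWord δ (runWord δ q a) b :=
  List.foldl_append ..

lemma wordPow_succ {σ : Type*} (w : List σ) (k : ℕ) :
    wordPow w (k + 1) = w ++ wordPow w k := by
  simp [wordPow, List.replicate_succ]

/-- In an aperiodic automaton, a state can be merged with any state reachable from it. -/
lemma merge_reachable {Q σ : Type*} (δ : Q → σ → Q) (hap : IsAperiodic δ)
    (p : Q) (v : List σ) :
    ∃ w : List σ, runWord δ p w = runWord δ (runWord δ p v) w := by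
  obtain ⟨k, -, hk⟩ := hap v
  refine ⟨wordPow v k, ?_⟩
  rw [hk p, wordPow_succ, runWord_append]

/-- With a sink, every pair of states can be merged. -/
lemma merge_pair {Q σ : Type*} (δ : Q → σ → Q) (hap : IsAperiodic δ)
    {t : Q} (ht : IsSink δ t) (p q : Q) :
    ∃ w : List σ, runWord δ p w = runWord δ q w := by
  obtain ⟨u, hu⟩ := ht p
  obtain ⟨v, hv⟩ := ht (runWord δ q u)
  obtain ⟨w, hw⟩ := merge_reachable δ hap (runWord δ q u) v
  refine ⟨u ++ w, ?_⟩
  rw [runWord_append, runWord_append, hu, ← hv, ← hw]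

lemma shrink {Q σ : Type*} [Fintype Q] [DecidableEq Q] (δ : Q → σ → Q)
    (hap : IsAperiodic δ) {t : Q} (ht : IsSink δ t) :
    ∀ n : ℕ, ∀ S : Finset Q, S.card ≤ n →
      ∃ w : List σ, (S.image (fun q => runWord δ q w)).card ≤ 1 := by
  intro n
  induction n with
  | zero => intro S hS; exact ⟨[], le_trans (Finset.card_image_le) (le_trans hS (Nat.zero_le 1))⟩
  | succ n ih =>
    intro S hS
    by_cases h1 : S.card ≤ 1
    · exact ⟨[], le_trans Finset.card_image_le h1⟩
    · obtain ⟨p, hp, q, hq, hpq⟩ := Finset.one_lt_card.mp (lt_of_not_ge h1)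
      obtain ⟨u, hu⟩ := merge_pair δ hap ht p q
      set f := fun x => runWord δ x u with hf
      have himg : S.image f = (S.erase q).image f := by
        apply Finset.Subset.antisymm
        · intro x hx
          obtain ⟨y, hy, rfl⟩ := Finset.mem_image.mp hx
          by_cases hyq : y = q
          · subst hyq
            exact Finset.mem_image.mpr ⟨p, Finset.mem_erase.mpr ⟨hpq, hp⟩, hu⟩
          · exact Finset.mem_image.mpr ⟨y, Finset.mem_erase.mpr ⟨hyq, hy⟩, rfl⟩
        · exact Finset.image_subset_image (Finset.erase_subset _ _)
      have hcard : (S.image f).card ≤ n := by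
        calc (S.image f).card ≤ (S.erase q).card := himg ▸ Finset.card_image_le
          _ = S.card - 1 := Finset.card_erase_of_mem hq
          _ ≤ n := by omega
      obtain ⟨w, hw⟩ := ih (S.image f) hcard
      refine ⟨u ++ w, le_trans (le_of_eq ?_) hw⟩
      congr 1
      rw [Finset.image_image]
      congr 1
      funext x
      simp [runWord_append, hf]

/-- An aperiodic DFA has a sink state iff it has a synchronizing word. -/
theorem aperiodic_sink_iff_sync {Q σ : Type*} [Fintype Q] [Nonempty Q] [Fintype σ]
    (δ : Q → σ → Q) (hap : IsAperiodic δ) :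
    (∃ t : Q, IsSink δ t) ↔ ∃ w : List σ, IsSyncWord δ w := by
  classical
  constructor
  · rintro ⟨t, ht⟩
    obtain ⟨w, hw⟩ := shrink δ hap ht (Fintype.card Q) Finset.univ (le_of_eq rfl)
    have hne : (Finset.univ.image (fun q : Q => runWord δ q w)).Nonempty :=
      ⟨runWord δ (Classical.arbitrary Q) w, Finset.mem_image.mpr ⟨_, Finset.mem_univ _, rfl⟩⟩
    obtain ⟨s, hs⟩ := Finset.card_eq_one.mp (le_antisymm hw hne.card_pos)
    refine ⟨w, s, fun q => ?_⟩
    have : runWord δ q w ∈ Finset.univ.image (fun q : Q => runWord δ q w) :=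
      Finset.mem_image.mpr ⟨q, Finset.mem_univ _, rfl⟩
    rw [hs] at this
    exact Finset.mem_singleton.mp this
  · rintro ⟨w, t, hw⟩
    exact ⟨t, fun q => ⟨w, hw q⟩⟩
end

section
/- Every DFA with at least two states whose transition graph is strongly connected possesses an almost minimal SCC: there exists a nonempty set M of pairs of states such that every (p, q) ∈ M satisfies p ≠ q; for any (p, q), (p', q') ∈ M there is a word w with (p·w, q·w) = (p', q'); and for every (p, q) ∈ M and every letter σ with p·σ ≠ q·σ there is a word s with ((p·σ)·s, (q·σ)·s) = (p, q). -/
/-- Every strongly connected DFA with at least two states possesses an almost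
minimal SCC. -/
theorem exists_almost_minimal_SCC {Q σ : Type*} [Fintype Q] [Nonempty Q] [Fintype σ]
    (δ : Q → σ → Q) (hsc : StronglyConn δ) (hcard : 2 ≤ Fintype.card Q) :
    ∃ M : Set (Q × Q), AlmostMinSCC δ M := by
  classical
  obtain ⟨a, b, hab⟩ := Fintype.exists_pair_of_one_lt_card (by omega : 1 < Fintype.card Q)
  set X : Set (Q × Q) := {x | x.1 ≠ x.2} with hX
  set Reach : Q × Q → Q × Q → Prop :=
    fun x y => ∃ w : List σ, runWord δ x.1 w = y.1 ∧ runWord δ x.2 w = y.2 with hReach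
  have reach_trans : ∀ x y z, Reach x y → Reach y z → Reach x z := by
    rintro x y z ⟨w, hw1, hw2⟩ ⟨v, hv1, hv2⟩
    exact ⟨w ++ v, by simp [runWord, List.foldl_append] at *; simp [hw1, hw2, hv1, hv2]⟩
  have reach_refl : ∀ x, Reach x x := fun x => ⟨[], rfl, rfl⟩
  set R : Q × Q → Set (Q × Q) := fun x => {y ∈ X | Reach x y} with hR
  obtain ⟨x₀, hx₀X, hmin⟩ := Set.exists_min_image X (fun x => (R x).ncard)
      (Set.toFinite X) ⟨(a, b), hab⟩
  have key : ∀ y ∈ R x₀, Reach y x₀ := by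
    intro y hy
    by_contra hnot
    have hsub : R y ⊂ R x₀ := by
      constructor
      · rintro z ⟨hzX, hz⟩
        exact ⟨hzX, reach_trans _ _ _ hy.2 hz⟩
      · intro hsup
        exact hnot (hsup ⟨hx₀X, reach_refl x₀⟩).2
    have := Set.ncard_lt_ncard hsub (Set.toFinite _)
    exact absurd (hmin y hy.1) (by omega)
  refine ⟨R x₀, ⟨x₀, hx₀X, reach_refl x₀⟩, ?_, ?_, ?_⟩
  · intro p q hpq
    exact hpq.1
  · intro p q p' q' h h'
    obtain ⟨w1, hw1, hw2⟩ := key _ h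
    obtain ⟨w2, hv1, hv2⟩ := h'.2
    exact ⟨w1 ++ w2, by simp [runWord, List.foldl_append] at *; simp [hw1, hw2, hv1, hv2]⟩
  · intro p q h c hne
    have hy : (δ p c, δ q c) ∈ R x₀ :=
      ⟨hne, reach_trans _ _ _ h.2 ⟨[c], rfl, rfl⟩⟩
    obtain ⟨w1, hw1, hw2⟩ := key _ hy
    obtain ⟨w2, hv1, hv2⟩ := h.2
    exact ⟨w1 ++ w2, by simp [runWord, List.foldl_append] at *; simp [hw1, hw2, hv1, hv2]⟩
end
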